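/- For any natural number n ≥ 1 and real numbers a₁, …, aₙ with each aᵢ ∈ [0,1], the gap between the average of exponentials and the exponential of the average satisfies (1/n)·∑ᵢ exp(aᵢ) − exp((1/n)·∑ᵢ aᵢ) ≤ (e−1)·log(e−1) + 2 − e. -/

import Mathlib

/-!
On `[0, 1]` the exponential lies below its chord `1 + (e - 1) x`, so the average of the `exp (a i)`
is at most `1 + (e - 1) m`, where `m` is the average of the `a i`. It remains to maximise
`1 + (e - 1) m - exp m` over all real `m`; the maximum `(e - 1) log (e - 1) + 2 - e` is attained
at `m = log (e - 1)`.
-/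

open Real Finset

lemma Real.exp_le_one_add_mul_of_mem_Icc {x : ℝ} (hx : x ∈ Set.Icc (0 : ℝ) 1) :
    exp x ≤ 1 + (exp 1 - 1) * x := by
  have h := convexOn_exp.2 (Set.mem_univ 0) (Set.mem_univ 1) (sub_nonneg.2 hx.2) hx.1
    (sub_add_cancel 1 x)
  simp only [smul_eq_mul, mul_zero, mul_one, zero_add, exp_zero] at h
  linarith

lemma Finset.average_exp_le_one_add_mul_average {ι : Type*} (s : Finset ι) (a : ι → ℝ)
    (ha : ∀ i ∈ s, a i ∈ Set.Icc (0 : ℝ) 1) :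
    1 / (#s : ℝ) * ∑ i ∈ s, exp (a i) ≤ 1 + (exp 1 - 1) * (1 / (#s : ℝ) * ∑ i ∈ s, a i) := by
  have hsum : ∑ i ∈ s, exp (a i) ≤ #s + (exp 1 - 1) * ∑ i ∈ s, a i := by
    calc ∑ i ∈ s, exp (a i) ≤ ∑ i ∈ s, (1 + (exp 1 - 1) * a i) :=
          sum_le_sum fun i hi => exp_le_one_add_mul_of_mem_Icc (ha i hi)
      _ = #s + (exp 1 - 1) * ∑ i ∈ s, a i := by
          rw [sum_add_distrib, ← mul_sum]; simp
  -- `1 / #s * #s` is `1`, or `0` when `s` is empty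
  have hcard : 1 / (#s : ℝ) * #s ≤ 1 := by
    rw [one_div]; exact inv_mul_le_one
  calc 1 / (#s : ℝ) * ∑ i ∈ s, exp (a i)
      ≤ 1 / (#s : ℝ) * (#s + (exp 1 - 1) * ∑ i ∈ s, a i) := by gcongr
    _ ≤ 1 + (exp 1 - 1) * (1 / (#s : ℝ) * ∑ i ∈ s, a i) := by linarith

lemma Real.mul_sub_exp_le {c : ℝ} (hc : 0 < c) (x : ℝ) : c * x - exp x ≤ c * log c - c := by
  have h := mul_le_mul_of_nonneg_left (add_one_le_exp (x - log c)) hc.le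
  rw [exp_sub, exp_log hc, mul_div_cancel₀ _ hc.ne'] at h
  linarith

theorem stmt_0_general (n : ℕ) (a : Fin n → ℝ)
    (ha : ∀ i, a i ∈ Set.Icc (0 : ℝ) 1) :
    (1 / (n : ℝ)) * ∑ i, Real.exp (a i) - Real.exp ((1 / (n : ℝ)) * ∑ i, a i)
      ≤ (Real.exp 1 - 1) * Real.log (Real.exp 1 - 1) + 2 - Real.exp 1 := by
  have hmean := average_exp_le_one_add_mul_average univ a fun i _ => ha i
  rw [card_univ, Fintype.card_fin] at hmean
  have he : 1 < exp 1 := one_lt_exp_iff.2 one_pos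
  have hconj := mul_sub_exp_le (sub_pos.2 he) ((1 / (n : ℝ)) * ∑ i, a i)
  linarith

theorem stmt_0 (n : ℕ) (hn : 1 ≤ n) (a : Fin n → ℝ)
    (ha : ∀ i, a i ∈ Set.Icc (0 : ℝ) 1) :
    (1 / (n : ℝ)) * ∑ i, Real.exp (a i) - Real.exp ((1 / (n : ℝ)) * ∑ i, a i)
      ≤ (Real.exp 1 - 1) * Real.log (Real.exp 1 - 1) + 2 - Real.exp 1 :=
  stmt_0_general n a ha
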